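/- Let ℓ₁, ℓ₂, ℓ̄₁, ℓ̄₂ be nonzero linear forms and q₁, q₂, q̄₁, q̄₂ quadratic forms in ℂ[X,Y,Z], and suppose ℓ̄₂ does not divide q̄₂. If the rank-one matrix identity (ℓ̄₂; q̄₂)·(q̄₁, ℓ̄₁) = (ℓ₂; q₂)·(q₁, ℓ₁) holds, i.e. ℓ̄₂·q̄₁ = ℓ₂·q₁, ℓ̄₂·ℓ̄₁ = ℓ₂·ℓ₁, q̄₂·q̄₁ = q₂·q₁, and q̄₂·ℓ̄₁ = q₂·ℓ₁, then there exists a ∈ ℂ, a ≠ 0, such that ℓ̄₁ = a·ℓ₁, q̄₁ = a·q₁, ℓ̄₂ = a⁻¹·ℓ₂, and q̄₂ = a⁻¹·q₂. (This uniqueness of rank-one factorizations is the key step showing that the fibres of the map α: W₅ → E are G-orbits in the blow-up description of X₄ ∪ X₅.) -/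

import Mathlib

/-!
A nonzero linear form is irreducible, hence prime in the UFD `ℂ[X,Y,Z]`. From `ℓ̄₂ ℓ̄₁ = ℓ₂ ℓ₁`
the prime `ℓ̄₂` divides the irreducible `ℓ₂`, so `ℓ₂ = u ℓ̄₂` for a unit `u`, i.e. a nonzero
scalar; the other three identities then follow by cancelling `ℓ̄₂` or `ℓ₁`.
-/

open MvPolynomial

abbrev R3 := MvPolynomial (Fin 3) ℂ

section RankOneFactorization

variable {M : Type*} [CommMonoidWithZero M] [IsCancelMulZero M]
  {l₁ l₂ lb₁ lb₂ q₁ q₂ qb₁ qb₂ : M}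

/-- Should `lb₂` divide `l₁` instead, `lb₂ ∣ q₂ l₁ = qb₂ lb₁` forces `lb₂ ∣ lb₁`, and cancelling
`lb₂` in `lb₂ lb₁ = l₂ l₁` gives `lb₂ ∣ l₂` all the same. -/
theorem dvd_of_rankOne_factorization (hlb₂ : Prime lb₂) (hl₁ : Irreducible l₁)
    (hnd : ¬ lb₂ ∣ qb₂) (e₂ : lb₂ * lb₁ = l₂ * l₁) (e₄ : qb₂ * lb₁ = q₂ * l₁) :
    lb₂ ∣ l₂ := by
  rcases hlb₂.dvd_or_dvd ⟨lb₁, e₂.symm⟩ with h | h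
  · exact h
  obtain ⟨v, rfl⟩ := hlb₂.irreducible.associated_of_dvd hl₁ h
  have hlb₁ : lb₂ ∣ lb₁ :=
    (hlb₂.dvd_or_dvd ⟨q₂ * v, by rw [e₄, mul_left_comm]⟩).resolve_left hnd
  obtain ⟨w, rfl⟩ := hlb₁
  have hw : lb₂ * w = l₂ * v :=
    mul_left_cancel₀ hlb₂.ne_zero (by rw [e₂, mul_left_comm])
  exact Units.dvd_mul_right.mp (Dvd.intro w hw)

theorem exists_isUnit_of_rankOne_factorization (hlb₂ : Prime lb₂) (hl₁ : Irreducible l₁)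
    (hl₂ : Irreducible l₂) (hnd : ¬ lb₂ ∣ qb₂) (e₁ : lb₂ * qb₁ = l₂ * q₁)
    (e₂ : lb₂ * lb₁ = l₂ * l₁) (e₄ : qb₂ * lb₁ = q₂ * l₁) :
    ∃ u : M, IsUnit u ∧ lb₁ = u * l₁ ∧ qb₁ = u * q₁ ∧ l₂ = u * lb₂ ∧ q₂ = u * qb₂ := by
  obtain ⟨u, rfl⟩ := hlb₂.irreducible.associated_of_dvd hl₂
    (dvd_of_rankOne_factorization hlb₂ hl₁ hnd e₂ e₄)
  have hlb₁ : lb₁ = u * l₁ := mul_left_cancel₀ hlb₂.ne_zero (by rw [e₂, mul_assoc])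
  refine ⟨u, u.isUnit, hlb₁, mul_left_cancel₀ hlb₂.ne_zero (by rw [e₁, mul_assoc]),
    mul_comm _ _, mul_right_cancel₀ hl₁.ne_zero ?_⟩
  rw [← e₄, hlb₁, mul_left_comm, mul_assoc]

end RankOneFactorization

namespace MvPolynomial

variable {σ K : Type*} [Field K] {p : MvPolynomial σ K}

theorem irreducible_of_isHomogeneous_one (hp : p.IsHomogeneous 1) (hp0 : p ≠ 0) :
    Irreducible p := by
  refine irreducible_of_totalDegree_eq_one (hp.totalDegree hp0) fun x hx => ?_
  refine isUnit_iff_ne_zero.mpr fun hx0 => hp0 (ext _ _ fun m => ?_)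
  simpa [hx0] using hx m

theorem prime_of_isHomogeneous_one (hp : p.IsHomogeneous 1) (hp0 : p ≠ 0) : Prime p :=
  (irreducible_of_isHomogeneous_one hp hp0).prime

end MvPolynomial

theorem stmt9_general (l₁ l₂ lb₁ lb₂ q₁ q₂ qb₁ qb₂ : R3)
    (hl₁ : l₁.IsHomogeneous 1) (hl₂ : l₂.IsHomogeneous 1)
    (hlb₂ : lb₂.IsHomogeneous 1)
    (hl₁0 : l₁ ≠ 0) (hl₂0 : l₂ ≠ 0) (hlb₂0 : lb₂ ≠ 0)
    (hnd : ¬ lb₂ ∣ qb₂)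
    (e₁ : lb₂ * qb₁ = l₂ * q₁) (e₂ : lb₂ * lb₁ = l₂ * l₁)
    (e₄ : qb₂ * lb₁ = q₂ * l₁) :
    ∃ a : ℂ, a ≠ 0 ∧ lb₁ = a • l₁ ∧ qb₁ = a • q₁ ∧ lb₂ = a⁻¹ • l₂ ∧ qb₂ = a⁻¹ • q₂ := by
  obtain ⟨u, hu, hlb₁, hqb₁, hl₂, hq₂⟩ := exists_isUnit_of_rankOne_factorization
    (prime_of_isHomogeneous_one hlb₂ hlb₂0) (irreducible_of_isHomogeneous_one hl₁ hl₁0)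
    (irreducible_of_isHomogeneous_one hl₂ hl₂0) hnd e₁ e₂ e₄
  obtain ⟨a, ha, rfl⟩ := isUnit_iff_eq_C_of_isReduced.mp hu
  have hinv : C a⁻¹ * C a = (1 : R3) := by rw [← C_mul, inv_mul_cancel₀ ha.ne_zero, C_1]
  refine ⟨a, ha.ne_zero, ?_, ?_, ?_, ?_⟩ <;> simp only [smul_eq_C_mul]
  · exact hlb₁
  · exact hqb₁
  · rw [hl₂, ← mul_assoc, hinv, one_mul]
  · rw [hq₂, ← mul_assoc, hinv, one_mul]

/-- Uniqueness of rank-one factorizations: if `ℓ₁, ℓ₂, ℓ̄₁, ℓ̄₂` are nonzero linear forms,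
`q₁, q₂, q̄₁, q̄₂` quadratic forms with `ℓ̄₂ ∤ q̄₂`, and
`(ℓ̄₂; q̄₂)·(q̄₁, ℓ̄₁) = (ℓ₂; q₂)·(q₁, ℓ₁)` entrywise, then there is `a ≠ 0` with
`ℓ̄₁ = a·ℓ₁`, `q̄₁ = a·q₁`, `ℓ̄₂ = a⁻¹·ℓ₂`, `q̄₂ = a⁻¹·q₂`. -/
theorem stmt9 (l₁ l₂ lb₁ lb₂ q₁ q₂ qb₁ qb₂ : R3)
    (hl₁ : l₁.IsHomogeneous 1) (hl₂ : l₂.IsHomogeneous 1)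
    (hlb₁ : lb₁.IsHomogeneous 1) (hlb₂ : lb₂.IsHomogeneous 1)
    (hl₁0 : l₁ ≠ 0) (hl₂0 : l₂ ≠ 0) (hlb₁0 : lb₁ ≠ 0) (hlb₂0 : lb₂ ≠ 0)
    (hq₁ : q₁.IsHomogeneous 2) (hq₂ : q₂.IsHomogeneous 2)
    (hqb₁ : qb₁.IsHomogeneous 2) (hqb₂ : qb₂.IsHomogeneous 2)
    (hnd : ¬ lb₂ ∣ qb₂)
    (e₁ : lb₂ * qb₁ = l₂ * q₁) (e₂ : lb₂ * lb₁ = l₂ * l₁)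
    (e₃ : qb₂ * qb₁ = q₂ * q₁) (e₄ : qb₂ * lb₁ = q₂ * l₁) :
    ∃ a : ℂ, a ≠ 0 ∧ lb₁ = a • l₁ ∧ qb₁ = a • q₁ ∧ lb₂ = a⁻¹ • l₂ ∧ qb₂ = a⁻¹ • q₂ :=
  stmt9_general l₁ l₂ lb₁ lb₂ q₁ q₂ qb₁ qb₂ hl₁ hl₂ hlb₂ hl₁0 hl₂0 hlb₂0 hnd e₁ e₂ e₄
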